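/- Let F ∈ C²(ℝ^d;ℝ) be (m,b)-dissipative and M-smooth, and define r̃₀(δ) = ((M+1)/2)δ + F(0) + (1/2)‖∇F(0)‖². If x ∈ ℝ^d satisfies F(x) ≥ r̃₀(2b/m), then for every β ≥ 4Md/(mb), ‖∇F(x)‖² − (2/β)ΔF(x) ≥ 0, where ΔF denotes the Laplacian of F. -/

import Mathlib

open MeasureTheory Real
open scoped RealInnerProductSpace NNReal

noncomputable section

/-- Euclidean space `ℝ^d`. -/
abbrev Ed (d : ℕ) := EuclideanSpace ℝ (Fin d)

/-- `(m,b)`-dissipativity: `⟨∇H x, x⟩ ≥ m‖x‖² - b`. -/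
def IsDissipative {d : ℕ} (m b : ℝ) (H : Ed d → ℝ) : Prop :=
  ∀ x, m * ‖x‖ ^ 2 - b ≤ ⟪gradient H x, x⟫

/-- `M`-smoothness: the gradient is `M`-Lipschitz. -/
def IsGradSmooth {d : ℕ} (M : ℝ) (H : Ed d → ℝ) : Prop :=
  ∀ x y, ‖gradient H x - gradient H y‖ ≤ M * ‖x - y‖

/-- The Laplacian `ΔF(x) = Σᵢ ∂²F/∂xᵢ²(x)`. -/
def laplacian {d : ℕ} (F : Ed d → ℝ) (x : Ed d) : ℝ :=
  ∑ i : Fin d, fderiv ℝ (fun y => fderiv ℝ F y (EuclideanSpace.single i 1)) x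
    (EuclideanSpace.single i 1)

/-- The inner product with the gradient is the Fréchet derivative. -/
lemma inner_gradient_eq {d : ℕ} (F : Ed d → ℝ) (y v : Ed d) :
    ⟪gradient F y, v⟫ = fderiv ℝ F y v := by
  rw [gradient, InnerProductSpace.toDual_symm_apply]

lemma fderiv_eq_toDual_gradient {d : ℕ} (F : Ed d → ℝ) (y : Ed d) :
    fderiv ℝ F y = InnerProductSpace.toDual ℝ (Ed d) (gradient F y) := by
  rw [gradient, LinearIsometryEquiv.apply_symm_apply]

/-- Descent lemma for `M`-smooth functions. -/
lemma descent {d : ℕ} (M : ℝ) (F : Ed d → ℝ) (hF : ContDiff ℝ 2 F)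
    (hsm : IsGradSmooth M F) (x : Ed d) :
    F x ≤ F 0 + ⟪gradient F 0, x⟫ + M / 2 * ‖x‖ ^ 2 := by
  have hdiff : Differentiable ℝ F := hF.differentiable (by norm_num)
  have hderiv : ∀ t ∈ Set.uIcc (0:ℝ) 1,
      HasDerivAt (fun t : ℝ => F (t • x)) (fderiv ℝ F (t • x) x) t := by
    intro t _
    have h1 : HasDerivAt (fun t : ℝ => t • x) x t := by
      simpa using (hasDerivAt_id t).smul_const x
    exact ((hdiff (t • x)).hasFDerivAt.comp_hasDerivAt t h1)
  have hcont : Continuous fun t : ℝ => fderiv ℝ F (t • x) x := by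
    exact ((hF.continuous_fderiv (by norm_num)).comp
      (continuous_id.smul continuous_const)).clm_apply continuous_const
  have hint : IntervalIntegrable (fun t : ℝ => fderiv ℝ F (t • x) x) volume 0 1 :=
    hcont.intervalIntegrable 0 1
  have heq : ∫ t in (0:ℝ)..1, fderiv ℝ F (t • x) x = F x - F 0 := by
    simpa using intervalIntegral.integral_eq_sub_of_hasDerivAt hderiv hint
  have hbound : ∀ t ∈ Set.Icc (0:ℝ) 1,
      fderiv ℝ F (t • x) x ≤ fderiv ℝ F 0 x + M * ‖x‖ ^ 2 * t := by
    intro t ht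
    have h1 : fderiv ℝ F (t • x) x - fderiv ℝ F 0 x
        = ⟪gradient F (t • x) - gradient F 0, x⟫ := by
      rw [inner_sub_left, inner_gradient_eq, inner_gradient_eq]
    have h2 : ⟪gradient F (t • x) - gradient F 0, x⟫
        ≤ ‖gradient F (t • x) - gradient F 0‖ * ‖x‖ := real_inner_le_norm _ _
    have h3 : ‖gradient F (t • x) - gradient F 0‖ ≤ M * ‖t • x‖ := by
      simpa using hsm (t • x) 0
    have h4 : ‖t • x‖ = t * ‖x‖ := by
      rw [norm_smul, Real.norm_eq_abs, abs_of_nonneg ht.1]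
    rw [h4] at h3
    have h5 := h2.trans (mul_le_mul_of_nonneg_right h3 (norm_nonneg x))
    nlinarith [h5]
  have hmono : ∫ t in (0:ℝ)..1, fderiv ℝ F (t • x) x
      ≤ ∫ t in (0:ℝ)..1, (fderiv ℝ F 0 x + M * ‖x‖ ^ 2 * t) := by
    apply intervalIntegral.integral_mono_on (by norm_num) hint
    · exact (Continuous.intervalIntegrable (by fun_prop) 0 1)
    · exact hbound
  have hcalc : ∫ t in (0:ℝ)..1, (fderiv ℝ F 0 x + M * ‖x‖ ^ 2 * t)
      = fderiv ℝ F 0 x + M / 2 * ‖x‖ ^ 2 := by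
    rw [intervalIntegral.integral_add (intervalIntegrable_const)
      (Continuous.intervalIntegrable (by fun_prop) 0 1),
      intervalIntegral.integral_const_mul, integral_id]
    simp
    ring
  rw [heq] at hmono
  rw [hcalc] at hmono
  rw [inner_gradient_eq]
  linarith

/-- The Laplacian of an `M`-smooth function is at most `M·d`. -/
lemma laplacian_le {d : ℕ} (M : ℝ) (hM : 0 ≤ M) (F : Ed d → ℝ) (hF : ContDiff ℝ 2 F)
    (hsm : IsGradSmooth M F) (x : Ed d) : laplacian F x ≤ M * d := by
  have hlip : LipschitzWith ⟨M, hM⟩ (fderiv ℝ F) := by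
    apply LipschitzWith.of_dist_le_mul
    intro a b
    rw [dist_eq_norm, dist_eq_norm]
    have : ‖fderiv ℝ F a - fderiv ℝ F b‖ = ‖gradient F a - gradient F b‖ := by
      rw [fderiv_eq_toDual_gradient, fderiv_eq_toDual_gradient, ← map_sub,
        LinearIsometryEquiv.norm_map]
    rw [this]
    exact hsm a b
  have hd2 : ContDiff ℝ 1 (fderiv ℝ F) := hF.fderiv_right (by norm_num)
  have hL : ‖fderiv ℝ (fderiv ℝ F) x‖ ≤ M := by
    exact norm_fderiv_le_of_lipschitz ℝ hlip (x₀ := x)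
  have key : ∀ i : Fin d,
      fderiv ℝ (fun y => fderiv ℝ F y (EuclideanSpace.single i 1)) x
        (EuclideanSpace.single i 1) ≤ M := by
    intro i
    set v : Ed d := EuclideanSpace.single i 1 with hv
    have hvn : ‖v‖ = 1 := by simp [hv, EuclideanSpace.norm_single]
    have hdiff : DifferentiableAt ℝ (fderiv ℝ F) x :=
      (hd2.differentiable one_ne_zero) x
    have hcomp : fderiv ℝ (fun y => fderiv ℝ F y v) x
        = (ContinuousLinearMap.apply ℝ ℝ v).comp (fderiv ℝ (fderiv ℝ F) x) := by
      have := fderiv_comp x (ContinuousLinearMap.apply ℝ ℝ v).differentiableAt hdiff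
      simpa [ContinuousLinearMap.fderiv, Function.comp_def] using this
    rw [hcomp]
    have h1 : ‖(fderiv ℝ (fderiv ℝ F) x) v v‖
        ≤ ‖fderiv ℝ (fderiv ℝ F) x‖ * ‖v‖ * ‖v‖ :=
      ((fderiv ℝ (fderiv ℝ F) x) v).le_opNorm v |>.trans
        (mul_le_mul_of_nonneg_right ((fderiv ℝ (fderiv ℝ F) x).le_opNorm v) (norm_nonneg v))
    simp only [ContinuousLinearMap.comp_apply, ContinuousLinearMap.apply_apply]
    calc (fderiv ℝ (fderiv ℝ F) x) v v ≤ ‖(fderiv ℝ (fderiv ℝ F) x) v v‖ := le_abs_self _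
      _ ≤ ‖fderiv ℝ (fderiv ℝ F) x‖ * ‖v‖ * ‖v‖ := h1
      _ ≤ M := by rw [hvn]; simpa using hL
  calc laplacian F x ≤ ∑ _i : Fin d, M := Finset.sum_le_sum (fun i _ => key i)
    _ = M * d := by simp [mul_comm]

set_option maxHeartbeats 1000000 in
/-- Outside the sublevel set `{F ≤ r̃₀(2b/m)}`, the drift dominates the diffusion:
`‖∇F(x)‖² - (2/β) ΔF(x) ≥ 0` for every `β ≥ 4Md/(mb)`. -/
theorem drift_dominates_laplacian
    (d : ℕ) (m b M : ℝ) (hm : 0 < m) (hb : 0 < b) (hM : 0 < M)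
    (F : Ed d → ℝ) (hF : ContDiff ℝ 2 F)
    (hdis : IsDissipative m b F) (hsm : IsGradSmooth M F)
    (x : Ed d)
    (hx : ((M + 1) / 2) * (2 * b / m) + F 0 + (1 / 2) * ‖gradient F 0‖ ^ 2 ≤ F x)
    (β : ℝ) (hβ : 4 * M * d / (m * b) ≤ β) :
    0 ≤ ‖gradient F x‖ ^ 2 - (2 / β) * laplacian F x := by
  -- Step 1: `‖x‖² ≥ 2b/m`.
  have hdesc := descent M F hF hsm x
  have hinner0 : ⟪gradient F 0, x⟫ ≤ (1/2) * ‖gradient F 0‖ ^ 2 + (1/2) * ‖x‖ ^ 2 := by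
    nlinarith [real_inner_le_norm (gradient F 0) x, sq_nonneg (‖gradient F 0‖ - ‖x‖)]
  have hx2 : 2 * b / m ≤ ‖x‖ ^ 2 := by
    have key : ((M + 1) / 2) * (2 * b / m) ≤ ((M + 1) / 2) * ‖x‖ ^ 2 := by linarith
    exact le_of_mul_le_mul_left key (by linarith)
  have hbm : 0 < 2 * b / m := by positivity
  have hxx : 0 < ‖x‖ ^ 2 := lt_of_lt_of_le hbm hx2
  have hnx : 0 < ‖x‖ := by nlinarith [norm_nonneg x]
  -- Step 2: `‖∇F x‖² ≥ mb/2`.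
  have hmb : m * (2 * b / m) = 2 * b := by field_simp
  have hgx : (m / 2) * ‖x‖ ^ 2 ≤ ‖gradient F x‖ * ‖x‖ := by
    have h1 := hdis x
    have h2 := real_inner_le_norm (gradient F x) x
    nlinarith [mul_le_mul_of_nonneg_left hx2 hm.le]
  have hgrad : (m / 2) * ‖x‖ ≤ ‖gradient F x‖ :=
    le_of_mul_le_mul_right (by nlinarith) hnx
  have hg2 : m * b / 2 ≤ ‖gradient F x‖ ^ 2 := by
    have hsq := mul_le_mul hgrad hgrad (by positivity) (norm_nonneg _)
    nlinarith [mul_le_mul_of_nonneg_left hx2 (by positivity : (0:ℝ) ≤ m / 2 * (m / 2))]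
  -- Step 3: bound the Laplacian term.
  rcases Nat.eq_zero_or_pos d with hd | hd
  · subst hd
    have : laplacian F x = 0 := by simp [laplacian]
    rw [this]
    nlinarith [sq_nonneg (‖gradient F x‖)]
  · have hd' : (0:ℝ) < d := by exact_mod_cast hd
    have hβ0 : 0 < β := lt_of_lt_of_le (by positivity) hβ
    have hlap := laplacian_le M hM.le F hF hsm x
    have h4 : 4 * M * d ≤ β * (m * b) := by
      have := (div_le_iff₀ (by positivity : (0:ℝ) < m * b)).mp hβ
      linarith
    have hstep : (2 / β) * laplacian F x ≤ m * b / 2 := by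
      have h5 : (2 / β) * laplacian F x ≤ (2 / β) * (M * d) :=
        mul_le_mul_of_nonneg_left hlap (by positivity)
      have h6 : (2 / β) * (M * d) ≤ m * b / 2 := by
        rw [div_mul_eq_mul_div, div_le_iff₀ hβ0]
        linarith [h4]
      linarith
    linarith
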